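/- arXiv:1411.1041 — 4 statements merged into one kernel-verified Lean document; each statement's English description precedes it below -/
import Mathlib

section
/- Let S and X be sets, σ : S → S and π : S → X maps, α > 1 a real number, κ' ≥ 0 a real constant, H : X → ℝ a function, and ĥ : S → ℝ a function satisfying ĥ(σ(s)) = α·ĥ(s) and |ĥ(s) − H(π(s))| ≤ κ' for all s ∈ S. If P, Q ∈ S and n ∈ ℕ are such that π(σᵐ(P)) = π(σᵐ(Q)) for all 0 ≤ m ≤ n, then |ĥ(P) − ĥ(Q)| ≤ 2·α⁻ⁿ·κ'. -/
/-! Iterating `ĥ ∘ σ = α ĥ` gives `αⁿ (ĥ P - ĥ Q) = ĥ (σⁿ P) - ĥ (σⁿ Q)`. Since `σⁿ P` and `σⁿ Q` have the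
same image under `π`, both heights there are within `κ'` of the same value `H (π (σⁿ P))`, so this
difference is at most `2κ'`; dividing by `αⁿ` gives the bound. -/

theorem apply_iterate_eq_pow_mul {S M : Type*} [Monoid M] {σ : S → S} {f : S → M} {a : M}
    (hf : ∀ s, f (σ s) = a * f s) (k : ℕ) (s : S) : f (σ^[k] s) = a ^ k * f s := by
  induction k with
  | zero => simp
  | succ k ih => rw [Function.iterate_succ_apply', hf, ih, pow_succ', mul_assoc]

theorem abs_sub_le_two_mul_of_map_eq {S X : Type*} {π : S → X} {H : X → ℝ} {f : S → ℝ} {κ : ℝ}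
    (hf : ∀ s, |f s - H (π s)| ≤ κ) {s t : S} (hst : π s = π t) : |f s - f t| ≤ 2 * κ := by
  calc |f s - f t| ≤ |f s - H (π s)| + |f t - H (π t)| := by
        rw [hst, abs_sub_comm (f t)]; exact abs_sub_le _ _ _
    _ ≤ 2 * κ := by linarith [hf s, hf t]

theorem stmt3_general {S X : Type*} (σ : S → S) (π : S → X) (α κ' : ℝ) (hα : 1 < α)
    (H : X → ℝ) (hhat : S → ℝ)
    (h1 : ∀ s : S, hhat (σ s) = α * hhat s)
    (h2 : ∀ s : S, |hhat s - H (π s)| ≤ κ')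
    (P Q : S) (n : ℕ) (hagree : ∀ m : ℕ, m ≤ n → π (σ^[m] P) = π (σ^[m] Q)) :
    |hhat P - hhat Q| ≤ 2 * (α ^ n)⁻¹ * κ' := by
  have hαn : 0 < α ^ n := pow_pos (by linarith) n
  have hscaled : α ^ n * |hhat P - hhat Q| ≤ 2 * κ' := by
    calc α ^ n * |hhat P - hhat Q| = |hhat (σ^[n] P) - hhat (σ^[n] Q)| := by
          rw [apply_iterate_eq_pow_mul h1, apply_iterate_eq_pow_mul h1, ← mul_sub, abs_mul,
            abs_of_pos hαn]
      _ ≤ 2 * κ' := abs_sub_le_two_mul_of_map_eq h2 (hagree n le_rfl)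
  calc |hhat P - hhat Q| = (α ^ n)⁻¹ * (α ^ n * |hhat P - hhat Q|) :=
        (inv_mul_cancel_left₀ hαn.ne' _).symm
    _ ≤ (α ^ n)⁻¹ * (2 * κ') := by gcongr
    _ = 2 * (α ^ n)⁻¹ * κ' := by ring

/-- Continuity estimate for the canonical height in the tree topology. -/
theorem stmt3 {S X : Type*} (σ : S → S) (π : S → X) (α κ' : ℝ) (hα : 1 < α) (hκ' : 0 ≤ κ')
    (H : X → ℝ) (hhat : S → ℝ)
    (h1 : ∀ s : S, hhat (σ s) = α * hhat s)
    (h2 : ∀ s : S, |hhat s - H (π s)| ≤ κ')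
    (P Q : S) (n : ℕ) (hagree : ∀ m : ℕ, m ≤ n → π (σ^[m] P) = π (σ^[m] Q)) :
    |hhat P - hhat Q| ≤ 2 * (α ^ n)⁻¹ * κ' :=
  stmt3_general σ π α κ' hα H hhat h1 h2 P Q n hagree
end

section
/- Let X be a type and C ⊆ X × X a relation. Let 𝒫 = {f : ℕ → X | ∀ n, (f(n), f(n+1)) ∈ C} carry the subspace topology induced from the product topology on ℕ → X, where X is given the discrete topology. Let α > 1, κ' ≥ 0 be real numbers, H : X → ℝ a function, and ĥ : 𝒫 → ℝ a function satisfying ĥ(σ(f)) = α·ĥ(f) and |ĥ(f) − H(f(0))| ≤ κ' for all f ∈ 𝒫, where σ(f) = (n ↦ f(n+1)). Then ĥ is continuous. -/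
/-! Since `ĥ (σⁿ f) = αⁿ ĥ f` and `ĥ` is within `κ'` of `H ∘ π`, the locally constant functions
`f ↦ H (f n) / αⁿ` approximate `ĥ` to within `κ' / αⁿ`; so `ĥ` is a uniform limit of continuous
functions. -/

open Filter Topology

section Telescoping

variable {P : Type*} {α κ : ℝ} {s : P → P} {h F : P → ℝ}

lemma apply_iterate_eq_pow_mul_s4 (hs : ∀ p, h (s p) = α * h p) (n : ℕ) (p : P) :
    h (s^[n] p) = α ^ n * h p := by
  rw [Function.Semiconj.iterate_right hs n p, mul_left_iterate_apply]

lemma abs_sub_comp_iterate_div_pow_le (hα : 0 < α) (hs : ∀ p, h (s p) = α * h p)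
    (hF : ∀ p, |h p - F p| ≤ κ) (n : ℕ) (p : P) :
    |h p - F (s^[n] p) / α ^ n| ≤ κ / α ^ n := by
  have hαn : 0 < α ^ n := pow_pos hα n
  have hFn := hF (s^[n] p)
  rw [apply_iterate_eq_pow_mul_s4 hs, show α ^ n * h p - F (s^[n] p) =
    (h p - F (s^[n] p) / α ^ n) * α ^ n by field_simp, abs_mul, abs_of_pos hαn] at hFn
  rwa [le_div_iff₀ hαn]

lemma tendstoUniformly_comp_iterate_div_pow (hα : 1 < α) (hs : ∀ p, h (s p) = α * h p)
    (hF : ∀ p, |h p - F p| ≤ κ) :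
    TendstoUniformly (fun n p => F (s^[n] p) / α ^ n) h atTop := by
  have hκα : Tendsto (fun n : ℕ => κ / α ^ n) atTop (𝓝 0) :=
    (tendsto_pow_atTop_atTop_of_one_lt hα).const_div_atTop κ
  rw [Metric.tendstoUniformly_iff]
  intro ε hε
  filter_upwards [hκα.eventually (gt_mem_nhds hε)] with n hn p
  rw [Real.dist_eq]
  exact (abs_sub_comp_iterate_div_pow_le (by linarith) hs hF n p).trans_lt hn

end Telescoping

section PathSpace

variable {X : Type*} {C : Set (X × X)}

abbrev PathSpace (C : Set (X × X)) := {f : ℕ → X // ∀ n, (f n, f (n + 1)) ∈ C}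

def PathSpace.shift (f : PathSpace C) : PathSpace C :=
  ⟨fun n => f.1 (n + 1), fun n => f.2 (n + 1)⟩

lemma PathSpace.shift_iterate_apply_zero (n : ℕ) (f : PathSpace C) :
    (shift^[n] f).1 0 = f.1 n := by
  induction n generalizing f with
  | zero => rfl
  | succ n ih => exact ih (shift f)

lemma PathSpace.continuous_apply [TopologicalSpace X] (n : ℕ) :
    Continuous fun f : PathSpace C => f.1 n :=
  (_root_.continuous_apply n).comp continuous_subtype_val

end PathSpace

theorem stmt4_general {X : Type*} (C : Set (X × X)) (α κ' : ℝ) (hα : 1 < α)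
    (H : X → ℝ) (hhat : {f : ℕ → X // ∀ n : ℕ, (f n, f (n + 1)) ∈ C} → ℝ)
    (h1 : ∀ f : {f : ℕ → X // ∀ n : ℕ, (f n, f (n + 1)) ∈ C},
      hhat ⟨fun n => f.1 (n + 1), fun n => f.2 (n + 1)⟩ = α * hhat f)
    (h2 : ∀ f : {f : ℕ → X // ∀ n : ℕ, (f n, f (n + 1)) ∈ C}, |hhat f - H (f.1 0)| ≤ κ') :
    letI : TopologicalSpace X := ⊥
    Continuous hhat := by
  let : TopologicalSpace X := ⊥
  have : DiscreteTopology X := ⟨rfl⟩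
  refine (tendstoUniformly_comp_iterate_div_pow (s := PathSpace.shift) (F := fun f => H (f.1 0))
    hα h1 h2).continuous (Frequently.of_forall fun n => ?_)
  simp only [PathSpace.shift_iterate_apply_zero]
  exact (continuous_of_discreteTopology.comp (PathSpace.continuous_apply n)).div_const _

/-- The canonical height is continuous in the tree topology on the path space. -/
theorem stmt4 {X : Type*} (C : Set (X × X)) (α κ' : ℝ) (hα : 1 < α) (hκ' : 0 ≤ κ')
    (H : X → ℝ) (hhat : {f : ℕ → X // ∀ n : ℕ, (f n, f (n + 1)) ∈ C} → ℝ)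
    (h1 : ∀ f : {f : ℕ → X // ∀ n : ℕ, (f n, f (n + 1)) ∈ C},
      hhat ⟨fun n => f.1 (n + 1), fun n => f.2 (n + 1)⟩ = α * hhat f)
    (h2 : ∀ f : {f : ℕ → X // ∀ n : ℕ, (f n, f (n + 1)) ∈ C}, |hhat f - H (f.1 0)| ≤ κ') :
    letI : TopologicalSpace X := ⊥
    Continuous hhat :=
  stmt4_general C α κ' hα H hhat h1 h2
end

section
/- Let Z be a type, φ : Z → Z a map, α > 1 a real number, and γ : Z → ℝ a bounded function. Then there exists a unique bounded function γ̂ : Z → ℝ such that γ(z) = γ̂(φ(z)) − α·γ̂(z) for all z ∈ Z. -/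
/-!
Precomposition with `φ` does not increase the sup norm, so `δ ↦ α⁻¹ • (δ ∘ φ - γ)` is a
contraction of ratio `‖α‖⁻¹` on the Banach space `ℓ^∞` of bounded functions. Its fixed points
are exactly the bounded solutions of `γ = δ ∘ φ - α • δ`, and Banach's fixed-point theorem gives
existence and uniqueness.
-/

open scoped ENNReal lp

section
variable {Y Z E : Type*} [NormedAddCommGroup E]

theorem memℓp_infty_iff_exists_norm_le {f : Z → E} : Memℓp f ∞ ↔ ∃ M, ∀ z, ‖f z‖ ≤ M := by
  simp only [memℓp_infty_iff, bddAbove_def, Set.forall_mem_range]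

theorem Memℓp.comp_infty {f : Z → E} (hf : Memℓp f ∞) (φ : Y → Z) : Memℓp (f ∘ φ) ∞ := by
  obtain ⟨M, hM⟩ := memℓp_infty_iff_exists_norm_le.1 hf
  exact memℓp_infty_iff_exists_norm_le.2 ⟨M, fun y => hM (φ y)⟩

namespace lp

def compInfty (φ : Y → Z) : ℓ^∞(Z, E) →+ ℓ^∞(Y, E) where
  toFun f := ⟨f ∘ φ, (lp.memℓp f).comp_infty φ⟩
  map_zero' := rfl
  map_add' _ _ := rfl

@[simp]
theorem compInfty_apply (φ : Y → Z) (f : ℓ^∞(Z, E)) (y : Y) : compInfty φ f y = f (φ y) := rfl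

theorem norm_compInfty_le (φ : Y → Z) (f : ℓ^∞(Z, E)) : ‖compInfty φ f‖ ≤ ‖f‖ :=
  lp.norm_le_of_forall_le (norm_nonneg f) fun y => lp.norm_apply_le_norm ENNReal.top_ne_zero f (φ y)

end lp

variable {𝕜 : Type*} [NormedField 𝕜] [NormedSpace 𝕜 E]

noncomputable def callSilvermanMap (φ : Z → Z) (α : 𝕜) (γ δ : ℓ^∞(Z, E)) : ℓ^∞(Z, E) :=
  α⁻¹ • (lp.compInfty φ δ - γ)

theorem contractingWith_callSilvermanMap (φ : Z → Z) {α : 𝕜} (hα : 1 < ‖α‖) (γ : ℓ^∞(Z, E)) :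
    ContractingWith ‖α‖₊⁻¹ (callSilvermanMap φ α γ) := by
  refine ⟨inv_lt_one_of_one_lt₀ hα, LipschitzWith.of_dist_le_mul fun δ ε => ?_⟩
  calc dist (callSilvermanMap φ α γ δ) (callSilvermanMap φ α γ ε)
      = ‖α‖⁻¹ * ‖lp.compInfty φ (δ - ε)‖ := by
        rw [dist_eq_norm, callSilvermanMap, callSilvermanMap, ← smul_sub, norm_smul, norm_inv,
          sub_sub_sub_cancel_right, map_sub]
    _ ≤ ‖α‖⁻¹ * dist δ ε := by
        rw [dist_eq_norm]
        gcongr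
        exact lp.norm_compInfty_le φ _
    _ = ‖α‖₊⁻¹ * dist δ ε := by simp

theorem isFixedPt_callSilvermanMap_iff (φ : Z → Z) {α : 𝕜} (hα : α ≠ 0) (γ δ : ℓ^∞(Z, E)) :
    Function.IsFixedPt (callSilvermanMap φ α γ) δ ↔ ∀ z, γ z = δ (φ z) - α • δ z := by
  rw [Function.IsFixedPt, callSilvermanMap, eq_comm, eq_inv_smul_iff₀ hα, lp.ext_iff, funext_iff]
  refine forall_congr' fun z => ?_
  simp only [lp.coeFn_smul, lp.coeFn_sub, Pi.smul_apply, Pi.sub_apply, lp.compInfty_apply]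
  constructor <;> intro h <;> rw [h] <;> abel

theorem existsUnique_lp_infty_solution [CompleteSpace E] (φ : Z → Z) {α : 𝕜} (hα : 1 < ‖α‖)
    (γ : ℓ^∞(Z, E)) : ∃! δ : ℓ^∞(Z, E), ∀ z, γ z = δ (φ z) - α • δ z := by
  have hα₀ : α ≠ 0 := norm_pos_iff.1 (one_pos.trans hα)
  have hT := contractingWith_callSilvermanMap φ hα γ
  simp only [← isFixedPt_callSilvermanMap_iff φ hα₀]
  exact ⟨_, hT.fixedPoint_isFixedPt, fun δ hδ => hT.fixedPoint_unique hδ⟩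

end

/-- The abstract fixed-point lemma for the functional equation γ = γhat∘φ − α·γhat. -/
theorem stmt10 {Z : Type*} (φ : Z → Z) (α : ℝ) (hα : 1 < α)
    (γ : Z → ℝ) (hγ : ∃ M : ℝ, ∀ z : Z, |γ z| ≤ M) :
    ∃ γhat : Z → ℝ,
      ((∃ M : ℝ, ∀ z : Z, |γhat z| ≤ M) ∧ ∀ z : Z, γ z = γhat (φ z) - α * γhat z) ∧
      ∀ g : Z → ℝ, ((∃ M : ℝ, ∀ z : Z, |g z| ≤ M) ∧ ∀ z : Z, γ z = g (φ z) - α * g z) →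
        g = γhat := by
  have hα' : 1 < ‖α‖ := by rwa [Real.norm_of_nonneg (by linarith)]
  obtain ⟨δ, hδ, hunique⟩ :=
    existsUnique_lp_infty_solution φ hα' (⟨γ, memℓp_infty_iff_exists_norm_le.2 hγ⟩ : ℓ^∞(Z, ℝ))
  refine ⟨δ, ⟨memℓp_infty_iff_exists_norm_le.1 δ.2, hδ⟩, fun g ⟨hg, hgγ⟩ => ?_⟩
  exact congrArg (⇑) (hunique ⟨g, memℓp_infty_iff_exists_norm_le.2 hg⟩ hgγ)
end

section
/- Let 𝒳 be a set and (𝒴, ℱ, μ) a measure space, let α > 1 be a real number, and suppose for each y ∈ 𝒴 a topology t_y on 𝒳 is given. Let φ : 𝒳 → 𝒳 be continuous with respect to t_y for every y ∈ 𝒴. Let γ : 𝒳 × 𝒴 → ℝ be a function that is (i) bounded, (ii) continuous in the first coordinate with respect to t_y for each fixed y, (iii) measurable in the second coordinate for each fixed x, and (iv) identically zero outside 𝒳 × W for some measurable W ⊆ 𝒴 with μ(W) < ∞. Then there exists a unique bounded function γ̂ : 𝒳 × 𝒴 → ℝ satisfying γ(x, y) = γ̂(φ(x), y) − α·γ̂(x,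 y) for all (x, y); moreover γ̂ is continuous in the first coordinate with respect to t_y for each y, measurable in the second coordinate for each x, and for each x ∈ 𝒳 the function y ↦ γ̂(x, y) is integrable with respect to μ. -/
/-!
The solution is Tate's telescoping series `γ̂(x, y) = -∑ₙ α^{-(n+1)} γ(φⁿ x, y)`: the
functional equation is a reindexing of the series, and since `α > 1` the series converges
uniformly, with geometric tail, so it inherits boundedness, continuity in `x`, measurability
in `y` and the support condition from `γ`. Uniqueness: the difference `d` of two bounded
solutions satisfies `d ∘ φ = α d`, so `|d (φⁿ x)| = αⁿ |d x|` stays bounded only if `d x = 0`.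
-/

open MeasureTheory Filter Topology

section TateSeries

variable {X : Type*} (α : ℝ) (φ : X → X)

noncomputable def tateSeries (u : X → ℝ) (x : X) : ℝ :=
  -∑' n : ℕ, (α ^ (n + 1))⁻¹ * u (φ^[n] x)

@[simp]
lemma tateSeries_zero : tateSeries α φ 0 = 0 := by
  ext x
  simp [tateSeries]

variable {α}

lemma hasSum_geometric_inv_succ (hα : 1 < α) (M : ℝ) :
    HasSum (fun n : ℕ => M * (α⁻¹) ^ (n + 1)) (M / (α - 1)) := by
  have hα₀ : α ≠ 0 := (zero_lt_one.trans hα).ne'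
  have hα₁ : α - 1 ≠ 0 := (sub_pos.2 hα).ne'
  have hsum := (hasSum_geometric_of_lt_one (inv_nonneg.2 (zero_lt_one.trans hα).le)
    (inv_lt_one_of_one_lt₀ hα)).mul_left (M * α⁻¹)
  have hval : M * α⁻¹ * (1 - α⁻¹)⁻¹ = M / (α - 1) := by
    field_simp
  simpa only [hval, mul_assoc, ← pow_succ'] using hsum

variable {φ} {u : X → ℝ} {M : ℝ}

lemma abs_tateSeries_term_le (hα : 1 < α) (hu : ∀ x, |u x| ≤ M) (x : X) (n : ℕ) :
    ‖(α ^ (n + 1))⁻¹ * u (φ^[n] x)‖ ≤ M * (α⁻¹) ^ (n + 1) := by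
  have hα₀ : 0 < α := zero_lt_one.trans hα
  rw [Real.norm_eq_abs, abs_mul, abs_of_pos (by positivity), inv_pow, mul_comm]
  exact mul_le_mul_of_nonneg_right (hu _) (by positivity)

lemma summable_tateSeries_term (hα : 1 < α) (hu : ∀ x, |u x| ≤ M) (x : X) :
    Summable fun n : ℕ => (α ^ (n + 1))⁻¹ * u (φ^[n] x) :=
  (hasSum_geometric_inv_succ hα M).summable.of_norm_bounded (abs_tateSeries_term_le hα hu x)

lemma abs_tateSeries_le (hα : 1 < α) (hu : ∀ x, |u x| ≤ M) (x : X) :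
    |tateSeries α φ u x| ≤ M / (α - 1) := by
  rw [tateSeries, abs_neg, ← Real.norm_eq_abs]
  exact tsum_of_norm_bounded (hasSum_geometric_inv_succ hα M) (abs_tateSeries_term_le hα hu x)

lemma tateSeries_comp_sub (hα : 1 < α) (hu : ∀ x, |u x| ≤ M) (x : X) :
    u x = tateSeries α φ u (φ x) - α * tateSeries α φ u x := by
  have hα₀ : α ≠ 0 := (zero_lt_one.trans hα).ne'
  set g : ℕ → ℝ := fun n => (α ^ n)⁻¹ * u (φ^[n] x)
  have hg : g = fun n => α * ((α ^ (n + 1))⁻¹ * u (φ^[n] x)) := by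
    ext n
    simp only [g, pow_succ, mul_inv]
    field_simp
  have hsplit : ∑' n, g n = u x + ∑' n, g (n + 1) :=
    (hg ▸ (summable_tateSeries_term hα hu x).mul_left α).tsum_eq_zero_add.trans (by simp [g])
  have hshift : tateSeries α φ u (φ x) = -∑' n, g (n + 1) := by
    simp only [tateSeries, g, Function.iterate_succ_apply]
  have hscale : α * tateSeries α φ u x = -∑' n, g n := by
    rw [tateSeries, mul_neg, ← tsum_mul_left, hg]
  rw [hshift, hscale, hsplit]
  ring

lemma continuous_tateSeries [TopologicalSpace X] (hα : 1 < α) (hφ : Continuous φ)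
    (hu_cont : Continuous u) (hu : ∀ x, |u x| ≤ M) : Continuous (tateSeries α φ u) :=
  (continuous_tsum (fun n => continuous_const.mul (hu_cont.comp (hφ.iterate n)))
    (hasSum_geometric_inv_succ hα M).summable
    (fun n x => abs_tateSeries_term_le hα hu x n)).neg

lemma eq_zero_of_bounded_of_comp_eq_mul (hα : 1 < α) {d : X → ℝ} (hd : ∀ x, |d x| ≤ M)
    (hdφ : ∀ x, d (φ x) = α * d x) : d = 0 := by
  ext x
  have hiter : ∀ n : ℕ, |d (φ^[n] x)| = α ^ n * |d x| := by
    intro n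
    induction n with
    | zero => simp
    | succ n ih =>
      rw [Function.iterate_succ_apply', hdφ, abs_mul, ih,
        abs_of_pos (zero_lt_one.trans hα), pow_succ]
      ring
  by_contra hx
  have hgrow : Tendsto (fun n : ℕ => α ^ n * |d x|) atTop atTop :=
    (tendsto_pow_atTop_atTop_of_one_lt hα).atTop_mul_const (abs_pos.2 hx)
  obtain ⟨n, hn⟩ := (hgrow.eventually_gt_atTop M).exists
  exact (hn.trans_le ((hiter n).symm.trans_le (hd _))).false

lemma eq_tateSeries_of_comp_sub (hα : 1 < α) (hu : ∀ x, |u x| ≤ M) {v : X → ℝ} {N : ℝ}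
    (hv : ∀ x, |v x| ≤ N) (hvu : ∀ x, u x = v (φ x) - α * v x) : v = tateSeries α φ u := by
  refine sub_eq_zero.1 (eq_zero_of_bounded_of_comp_eq_mul (φ := φ) (M := N + M / (α - 1)) hα
    (fun x => (abs_sub _ _).trans (add_le_add (hv x) (abs_tateSeries_le hα hu x))) fun x => ?_)
  have := tateSeries_comp_sub (φ := φ) hα hu x
  simp only [Pi.sub_apply]
  linarith [hvu x]

end TateSeries

lemma measurable_tsum_of_summable {Y : Type*} [MeasurableSpace Y] {f : ℕ → Y → ℝ}
    (hf : ∀ n, Measurable (f n)) (hsum : ∀ y, Summable fun n => f n y) :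
    Measurable fun y => ∑' n, f n y :=
  measurable_of_tendsto_metrizable (fun _ => Finset.measurable_sum _ fun n _ => hf n)
    (tendsto_pi_nhds.2 fun y => (hsum y).hasSum.tendsto_sum_nat)

lemma integrable_of_bounded_of_eq_zero_off {Y : Type*} [MeasurableSpace Y] {μ : Measure Y}
    {f : Y → ℝ} {W : Set Y} {M : ℝ} (hW : μ W < ⊤) (hf : Measurable f) (hbd : ∀ y, |f y| ≤ M)
    (hoff : ∀ y, y ∉ W → f y = 0) : Integrable f μ :=
  (Measure.integrableOn_of_bounded hW.ne hf.aestronglyMeasurable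
    (Eventually.of_forall hbd)).integrable_of_forall_notMem_eq_zero hoff

/-- Lemma 6.2: existence and uniqueness of the local canonical height defect solution. -/
theorem stmt12 {𝒳 𝒴 : Type*} [MeasurableSpace 𝒴] (μ : MeasureTheory.Measure 𝒴)
    (t : 𝒴 → TopologicalSpace 𝒳) (α : ℝ) (hα : 1 < α)
    (φ : 𝒳 → 𝒳) (hφ : ∀ y : 𝒴, @Continuous _ _ (t y) (t y) φ)
    (γ : 𝒳 → 𝒴 → ℝ)
    (hbd : ∃ M : ℝ, ∀ (x : 𝒳) (y : 𝒴), |γ x y| ≤ M)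
    (hcont : ∀ y : 𝒴, @Continuous _ _ (t y) _ fun x => γ x y)
    (hmeas : ∀ x : 𝒳, Measurable fun y => γ x y)
    (hsupp : ∃ W : Set 𝒴, MeasurableSet W ∧ μ W < ⊤ ∧
      ∀ (x : 𝒳) (y : 𝒴), y ∉ W → γ x y = 0) :
    ∃ γhat : 𝒳 → 𝒴 → ℝ,
      ((∃ M : ℝ, ∀ (x : 𝒳) (y : 𝒴), |γhat x y| ≤ M) ∧
       (∀ (x : 𝒳) (y : 𝒴), γ x y = γhat (φ x) y - α * γhat x y) ∧
       (∀ y : 𝒴, @Continuous _ _ (t y) _ fun x => γhat x y) ∧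
       (∀ x : 𝒳, Measurable fun y => γhat x y) ∧
       (∀ x : 𝒳, MeasureTheory.Integrable (fun y => γhat x y) μ)) ∧
      ∀ g : 𝒳 → 𝒴 → ℝ, (∃ M : ℝ, ∀ (x : 𝒳) (y : 𝒴), |g x y| ≤ M) →
        (∀ (x : 𝒳) (y : 𝒴), γ x y = g (φ x) y - α * g x y) → g = γhat := by
  obtain ⟨M, hM⟩ := hbd
  obtain ⟨W, -, hW, hW_zero⟩ := hsupp
  set γhat : 𝒳 → 𝒴 → ℝ := fun x y => tateSeries α φ (γ · y) x
  have hbound : ∀ x y, |γhat x y| ≤ M / (α - 1) := fun x y => abs_tateSeries_le hα (hM · y) x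
  have hmeas_hat : ∀ x, Measurable fun y => γhat x y := fun x =>
    (measurable_tsum_of_summable (fun n => measurable_const.mul (hmeas _))
      fun y => summable_tateSeries_term hα (hM · y) x).neg
  refine ⟨γhat, ⟨⟨_, hbound⟩, fun x y => tateSeries_comp_sub hα (hM · y) x,
    fun y => letI := t y; continuous_tateSeries hα (hφ y) (hcont y) (hM · y), hmeas_hat,
    fun x => integrable_of_bounded_of_eq_zero_off hW (hmeas_hat x) (hbound x) fun y hy => ?_⟩,
    fun g ⟨_, hN⟩ hg => funext₂ fun x y =>
      congrFun (eq_tateSeries_of_comp_sub hα (hM · y) (hN · y) (hg · y)) x⟩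
  have hγ_zero : (γ · y) = 0 := funext fun x => hW_zero x y hy
  simp only [γhat, hγ_zero, tateSeries_zero, Pi.zero_apply]
end
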